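/- Nonnegativity of the delayed account: if 0 ≤ K ≤ 1/(1 + X_max), then for every return sequence X(k) ∈ [X_min, X_max] the one-step-delayed high-frequency trader's account value satisfies V(k) ≥ 0 for all k ≥ 0. -/

import Mathlib

/-!
While the trader's fraction `K * (1 + X k)` of capital stays in `[0, 1]`, the investment
`I (k+1) = K * (1 + X k) * V k` executed at stage `k+1` never exceeds the account value `V (k+1)`.
This invariant propagates: a loss `I * x` with `x > -1` then costs less than `V`, and `K ≤ 1`
keeps the next investment below what remains. Nonnegativity of `V` follows at once.
-/

/-- Account value of the one-step-delayed high-frequency trader with Kelly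
fraction `K`, initial value `v` and return sequence `X`:
`V 0 = V 1 = v` and `V (k+1) = V k + I k * X k` for `k ≥ 1`, where
`I k = K * (1 + X (k-1)) * V (k-1)` is the investment executed at stage `k`. -/
def delayedAcct (K v : ℝ) (X : ℕ → ℝ) : ℕ → ℝ
  | 0 => v
  | 1 => v
  | (k + 2) => delayedAcct K v X (k + 1)
      + (K * (1 + X k) * delayedAcct K v X k) * X (k + 1)

lemma mul_one_add_mul_le_add_mul {K x I V : ℝ} (hK : K ≤ 1) (hKx : K * (1 + x) ≤ 1)
    (hx : 0 ≤ 1 + x) (hI : 0 ≤ I) (hIV : I ≤ V) :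
    K * (1 + x) * V ≤ V + I * x := by
  have hV : 0 ≤ V := hI.trans hIV
  rcases le_or_gt 0 x with hx0 | hx0
  · calc K * (1 + x) * V ≤ 1 * V := mul_le_mul_of_nonneg_right hKx hV
      _ ≤ V + I * x := by nlinarith [mul_nonneg hI hx0]
  · calc K * (1 + x) * V ≤ (1 + x) * V := by nlinarith [mul_nonneg hx hV]
      _ = V + V * x := by ring
      _ ≤ V + I * x := by nlinarith [mul_le_mul_of_nonpos_right hIV hx0.le]

section delayedAcct

variable {K v : ℝ} {X : ℕ → ℝ}

lemma delayedAcct_add_two (k : ℕ) :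
    delayedAcct K v X (k + 2) =
      delayedAcct K v X (k + 1) + K * (1 + X k) * delayedAcct K v X k * X (k + 1) :=
  rfl

lemma delayedAcct_nonneg_and_investment_le (hv : 0 ≤ v) (hK0 : 0 ≤ K) (hK1 : K ≤ 1)
    (hX : ∀ k, 0 ≤ 1 + X k) (hKX : ∀ k, K * (1 + X k) ≤ 1) (k : ℕ) :
    0 ≤ delayedAcct K v X k ∧
      K * (1 + X k) * delayedAcct K v X k ≤ delayedAcct K v X (k + 1) := by
  induction k with
  | zero =>
    refine ⟨hv, ?_⟩
    calc K * (1 + X 0) * v ≤ 1 * v := mul_le_mul_of_nonneg_right (hKX 0) hv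
      _ = v := one_mul v
  | succ k ih =>
    obtain ⟨hVk, hI⟩ := ih
    have hI0 : 0 ≤ K * (1 + X k) * delayedAcct K v X k :=
      mul_nonneg (mul_nonneg hK0 (hX k)) hVk
    refine ⟨hI0.trans hI, ?_⟩
    rw [delayedAcct_add_two]
    exact mul_one_add_mul_le_add_mul hK1 (hKX (k + 1)) (hX (k + 1)) hI0 hI

end delayedAcct

theorem delayed_account_nonneg_general
    (Xmin Xmax : ℝ) (hXmin : -1 < Xmin) (hXmaxPos : 0 < Xmax)
    (v : ℝ) (hv : 0 < v) (K : ℝ) (hK0 : 0 ≤ K) (hK1 : K ≤ 1 / (1 + Xmax))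
    (X : ℕ → ℝ) (hX : ∀ k, X k ∈ Set.Icc Xmin Xmax) :
    ∀ k, 0 ≤ delayedAcct K v X k := by
  have hKXmax : K * (1 + Xmax) ≤ 1 := (le_div_iff₀ (by linarith)).mp hK1
  have hKle : K ≤ 1 := by nlinarith
  have hXpos : ∀ k, 0 ≤ 1 + X k := fun k => by linarith [(hX k).1]
  have hKX : ∀ k, K * (1 + X k) ≤ 1 := fun k =>
    (mul_le_mul_of_nonneg_left (by linarith [(hX k).2]) hK0).trans hKXmax
  exact fun k => (delayedAcct_nonneg_and_investment_le hv.le hK0 hKle hXpos hKX k).1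

/-- **Nonnegativity of the delayed account.** If `0 ≤ K ≤ 1/(1 + Xmax)`,
where `-1 < Xmin < 0 < Xmax`, then for every return sequence with values in
`[Xmin, Xmax]` the one-step-delayed high-frequency trader's account value
(started at `v > 0`) satisfies `V k ≥ 0` for all `k ≥ 0`. -/
theorem delayed_account_nonneg
    (Xmin Xmax : ℝ) (hXmin : -1 < Xmin) (hXminNeg : Xmin < 0) (hXmaxPos : 0 < Xmax)
    (v : ℝ) (hv : 0 < v) (K : ℝ) (hK0 : 0 ≤ K) (hK1 : K ≤ 1 / (1 + Xmax))
    (X : ℕ → ℝ) (hX : ∀ k, X k ∈ Set.Icc Xmin Xmax) :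
    ∀ k, 0 ≤ delayedAcct K v X k :=
  delayed_account_nonneg_general Xmin Xmax hXmin hXmaxPos v hv K hK0 hK1 X hX
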